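/- Let A = ℝ[X,Y]/(X³Y, X²Y², Y⁴, X³−Y³) and let φ be an ℝ-algebra automorphism of A with φ(X) ≡ AX + CX² + DXY + EY² and φ(Y) ≡ AY + LX² + MXY + NY² modulo 𝔫³ (A ≠ 0). Then the condition φ(X³ − Y³) = 0 forces M = C. -/

import Mathlib

/-- The Weil algebra `A = ℝ[X,Y]/(X³Y, X²Y², Y⁴, X³−Y³)`. -/
noncomputable abbrev WB : Type :=
  MvPolynomial (Fin 2) ℝ ⧸
    Ideal.span ({(MvPolynomial.X 0 : MvPolynomial (Fin 2) ℝ) ^ 3 * MvPolynomial.X 1,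
      (MvPolynomial.X 0) ^ 2 * (MvPolynomial.X 1) ^ 2, (MvPolynomial.X 1) ^ 4,
      (MvPolynomial.X 0) ^ 3 - (MvPolynomial.X 1) ^ 3} : Set (MvPolynomial (Fin 2) ℝ))

/-- The residue class of `X`. -/
noncomputable def bx : WB := Ideal.Quotient.mk _ (MvPolynomial.X 0)

/-- The residue class of `Y`. -/
noncomputable def bY : WB := Ideal.Quotient.mk _ (MvPolynomial.X 1)

/-- The maximal (nilpotent) ideal `𝔫 = (X, Y)` of `A`. -/
noncomputable def mIdeal : Ideal WB := Ideal.span {bx, bY}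

/-!
Since `𝔫⁵ = 0`, the cube of an element of `𝔫` only depends on it modulo `𝔫³`, so
`φ(X)³ = (AX + q)³ = A³X³ + 3A²X²q` for the quadratic part `q`, which works out to
`A³Y³ + 3A²C·XY³`; likewise `φ(Y)³ = A³Y³ + 3A²M·XY³`. Applying `φ` to `X³ = Y³` gives
`3A²(C - M)·XY³ = 0`, and `XY³ ≠ 0` because the functional `p ↦ [X⁴]p + [XY³]p` on `ℝ[X,Y]`
vanishes on the defining ideal but not on `XY³`.
-/
open MvPolynomial Pointwise

theorem Set.exists_eq_pow_mul_pow_of_mem_pair_pow {M : Type*} [CommMonoid M] {x y z : M} {n : ℕ}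
    (hz : z ∈ ({x, y} : Set M) ^ n) : ∃ i j, i + j = n ∧ z = x ^ i * y ^ j := by
  induction n generalizing z with
  | zero => exact ⟨0, 0, rfl, by simpa using hz⟩
  | succ n ih =>
    rw [pow_succ, Set.mem_mul] at hz
    obtain ⟨a, ha, b, hb, rfl⟩ := hz
    obtain ⟨i, j, hij, rfl⟩ := ih ha
    rcases hb with rfl | rfl
    · exact ⟨i + 1, j, by omega, by rw [pow_succ, mul_right_comm]⟩
    · exact ⟨i, j + 1, by omega, by rw [pow_succ, mul_assoc]⟩

theorem Ideal.pow_succ_sub_pow_succ_mem {R : Type*} [CommRing R] {I : Ideal R} {x y : R}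
    (hx : x ∈ I) (hy : y ∈ I) {n : ℕ} (hxy : x - y ∈ I ^ n) (k : ℕ) :
    x ^ (k + 1) - y ^ (k + 1) ∈ I ^ (n + k) := by
  rw [← geom_sum₂_mul, add_comm n, pow_add]
  refine Ideal.mul_mem_mul (Ideal.sum_mem _ fun i hi => ?_) hxy
  have hik : i + (k + 1 - 1 - i) = k := by simp at hi; omega
  rw [show I ^ k = I ^ i * I ^ (k + 1 - 1 - i) by rw [← pow_add, hik]]
  exact Ideal.mul_mem_mul (Ideal.pow_mem_pow hx _) (Ideal.pow_mem_pow hy _)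

theorem Ideal.pow_three_eq_of_sub_mem {R : Type*} [CommRing R] {I : Ideal R} (hI : I ^ 5 = ⊥)
    {x u q : R} (hu : u ∈ I) (hq : q ∈ I ^ 2) (hx : x - (u + q) ∈ I ^ 3) :
    x ^ 3 = u ^ 3 + 3 * u ^ 2 * q := by
  have huq : u + q ∈ I := add_mem hu (Ideal.pow_le_self two_ne_zero hq)
  have hxI : x ∈ I := by simpa using add_mem (Ideal.pow_le_self three_ne_zero hx) huq
  have hcube : x ^ 3 - (u + q) ^ 3 ∈ I ^ 5 := Ideal.pow_succ_sub_pow_succ_mem hxI huq hx 2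
  have htail : q ^ 2 * (3 * u + q) ∈ I ^ 5 :=
    pow_succ I 4 ▸ Ideal.mul_mem_mul (pow_mul I 2 2 ▸ Ideal.pow_mem_pow hq 2)
      (add_mem (Ideal.mul_mem_left _ _ hu) (Ideal.pow_le_self two_ne_zero hq))
  rw [hI, Ideal.mem_bot] at hcube htail
  linear_combination hcube + htail

noncomputable abbrev weilRel : Ideal (MvPolynomial (Fin 2) ℝ) :=
  Ideal.span {X 0 ^ 3 * X 1, X 0 ^ 2 * X 1 ^ 2, X 1 ^ 4, X 0 ^ 3 - X 1 ^ 3}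

theorem mk_weilRel_generator_eq_zero {p : MvPolynomial (Fin 2) ℝ}
    (hp : p ∈ ({X 0 ^ 3 * X 1, X 0 ^ 2 * X 1 ^ 2, X 1 ^ 4, X 0 ^ 3 - X 1 ^ 3} : Set _)) :
    (Ideal.Quotient.mk weilRel p : WB) = 0 :=
  Ideal.Quotient.eq_zero_iff_mem.mpr (Ideal.subset_span hp)

theorem bx_pow_three_mul_bY : bx ^ 3 * bY = 0 := by
  have h := mk_weilRel_generator_eq_zero (p := X 0 ^ 3 * X 1) (by simp)
  rwa [map_mul, map_pow] at h

theorem bx_sq_mul_bY_sq : bx ^ 2 * bY ^ 2 = 0 := by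
  have h := mk_weilRel_generator_eq_zero (p := X 0 ^ 2 * X 1 ^ 2) (by simp)
  rwa [map_mul, map_pow, map_pow] at h

theorem bY_pow_four : bY ^ 4 = 0 := by
  have h := mk_weilRel_generator_eq_zero (p := X 1 ^ 4) (by simp)
  rwa [map_pow] at h

theorem bx_pow_three : bx ^ 3 = bY ^ 3 := by
  have h := mk_weilRel_generator_eq_zero (p := X 0 ^ 3 - X 1 ^ 3) (by simp)
  rwa [map_sub, map_pow, map_pow, sub_eq_zero] at h

theorem bx_pow_mul_bY_pow_eq_zero {i j : ℕ} (hij : i + j = 5) : bx ^ i * bY ^ j = 0 := by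
  obtain ⟨rfl⟩ : j = 5 - i := by omega
  have hi : i ≤ 5 := by omega
  interval_cases i
  · linear_combination bY * bY_pow_four
  · linear_combination bx * bY_pow_four
  · linear_combination bY * bx_sq_mul_bY_sq
  · linear_combination bY ^ 2 * bx_pow_three + bY * bY_pow_four
  · linear_combination bx * bY * bx_pow_three + bx * bY_pow_four
  · linear_combination bx ^ 2 * bx_pow_three + bY * bx_sq_mul_bY_sq

theorem mIdeal_pow_five : mIdeal ^ 5 = ⊥ := by
  rw [show mIdeal ^ 5 = Ideal.span ({bx, bY} ^ 5) from Submodule.span_pow _ 5, Ideal.span_eq_bot]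
  intro z hz
  obtain ⟨i, j, hij, rfl⟩ := Set.exists_eq_pow_mul_pow_of_mem_pair_pow hz
  exact bx_pow_mul_bY_pow_eq_zero hij

theorem bx_mem_mIdeal : bx ∈ mIdeal := Ideal.subset_span (by simp)

theorem bY_mem_mIdeal : bY ∈ mIdeal := Ideal.subset_span (by simp)

theorem quadratic_mem_mIdeal_sq (c d e : ℝ) :
    c • bx ^ 2 + (d • (bx * bY) + e • bY ^ 2) ∈ mIdeal ^ 2 := by
  have hxy : bx * bY ∈ mIdeal ^ 2 :=
    pow_two mIdeal ▸ Ideal.mul_mem_mul bx_mem_mIdeal bY_mem_mIdeal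
  refine add_mem (Submodule.smul_of_tower_mem _ c ?_)
    (add_mem (Submodule.smul_of_tower_mem _ d hxy) (Submodule.smul_of_tower_mem _ e ?_))
  · exact Ideal.pow_mem_pow bx_mem_mIdeal 2
  · exact Ideal.pow_mem_pow bY_mem_mIdeal 2

-- The `ℝ`-action on `WB` is the quotient-module one, which `Algebra.smul_def` does not match
-- syntactically.
theorem real_smul_eq_algebraMap_mul (r : ℝ) (x : WB) : r • x = algebraMap ℝ WB r * x :=
  Algebra.smul_def r x

theorem cube_expansion_bx (a c d e : ℝ) :
    (a • bx) ^ 3 + 3 * (a • bx) ^ 2 * (c • bx ^ 2 + (d • (bx * bY) + e • bY ^ 2)) =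
      a ^ 3 • bY ^ 3 + (3 * a ^ 2 * c) • (bx * bY ^ 3) := by
  simp only [real_smul_eq_algebraMap_mul, map_mul, map_pow, map_ofNat]
  set ι := algebraMap ℝ WB
  linear_combination (ι a ^ 3 + 3 * ι a ^ 2 * ι c * bx) * bx_pow_three
    + 3 * ι a ^ 2 * ι d * bx_pow_three_mul_bY + 3 * ι a ^ 2 * ι e * bx_sq_mul_bY_sq

theorem cube_expansion_bY (a l m n : ℝ) :
    (a • bY) ^ 3 + 3 * (a • bY) ^ 2 * (l • bx ^ 2 + (m • (bx * bY) + n • bY ^ 2)) =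
      a ^ 3 • bY ^ 3 + (3 * a ^ 2 * m) • (bx * bY ^ 3) := by
  simp only [real_smul_eq_algebraMap_mul, map_mul, map_pow, map_ofNat]
  set ι := algebraMap ℝ WB
  linear_combination 3 * ι a ^ 2 * ι l * bx_sq_mul_bY_sq + 3 * ι a ^ 2 * ι n * bY_pow_four

noncomputable def xyExp (a b : ℕ) : Fin 2 →₀ ℕ := Finsupp.single 0 a + Finsupp.single 1 b

theorem X_pow_mul_X_pow_eq_monomial {R : Type*} [CommSemiring R] (a b : ℕ) :
    (X 0 ^ a * X 1 ^ b : MvPolynomial (Fin 2) R) = monomial (xyExp a b) 1 := by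
  rw [X_pow_eq_monomial, X_pow_eq_monomial, monomial_mul, mul_one, xyExp]

theorem xyExp_le_xyExp {a b c d : ℕ} : xyExp c d ≤ xyExp a b ↔ c ≤ a ∧ d ≤ b := by
  simp [xyExp, Finsupp.le_def, Fin.forall_fin_two]

theorem xyExp_sub_xyExp (a b c d : ℕ) : xyExp a b - xyExp c d = xyExp (a - c) (b - d) := by
  ext i; fin_cases i <;> simp [xyExp]

theorem coeff_xyExp_mul_X_pow_mul_X_pow {R : Type*} [CommSemiring R] (q : MvPolynomial (Fin 2) R)
    (a b c d : ℕ) :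
    coeff (xyExp a b) (q * (X 0 ^ c * X 1 ^ d)) =
      if c ≤ a ∧ d ≤ b then coeff (xyExp (a - c) (b - d)) q else 0 := by
  simp only [X_pow_mul_X_pow_eq_monomial, coeff_mul_monomial', mul_one, xyExp_le_xyExp,
    xyExp_sub_xyExp]

noncomputable def weilDual (p : MvPolynomial (Fin 2) ℝ) : ℝ :=
  coeff (xyExp 4 0) p + coeff (xyExp 1 3) p

theorem weilDual_eq_zero_of_mem {p : MvPolynomial (Fin 2) ℝ} (hp : p ∈ weilRel) :
    weilDual p = 0 := by
  simp only [weilRel, Ideal.mem_span_insert, Ideal.mem_span_singleton'] at hp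
  obtain ⟨q₁, _, ⟨q₂, _, ⟨q₃, _, ⟨q₄, rfl⟩, rfl⟩, rfl⟩, rfl⟩ := hp
  have e₁ : (X 0 ^ 3 * X 1 : MvPolynomial (Fin 2) ℝ) = X 0 ^ 3 * X 1 ^ 1 := by ring
  have e₃ : (X 1 ^ 4 : MvPolynomial (Fin 2) ℝ) = X 0 ^ 0 * X 1 ^ 4 := by ring
  have e₄ : q₄ * (X 0 ^ 3 - X 1 ^ 3 : MvPolynomial (Fin 2) ℝ) =
      q₄ * (X 0 ^ 3 * X 1 ^ 0) - q₄ * (X 0 ^ 0 * X 1 ^ 3) := by ring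
  rw [e₁, e₃, e₄]
  -- on `q₄ (X³ - Y³)` both coefficients equal the `X`-coefficient of `q₄`, and cancel
  simp only [weilDual, coeff_add, coeff_sub, coeff_xyExp_mul_X_pow_mul_X_pow]
  norm_num

theorem bx_mul_bY_pow_three_ne_zero : bx * bY ^ 3 ≠ 0 := by
  intro h
  have hmem : (X 0 ^ 1 * X 1 ^ 3 : MvPolynomial (Fin 2) ℝ) ∈ weilRel := by
    rw [← Ideal.Quotient.eq_zero_iff_mem, map_mul, map_pow, map_pow, pow_one]
    exact h
  have := weilDual_eq_zero_of_mem hmem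
  rw [← one_mul (X 0 ^ 1 * _), weilDual, coeff_xyExp_mul_X_pow_mul_X_pow,
    coeff_xyExp_mul_X_pow_mul_X_pow] at this
  norm_num [xyExp] at this

/-- If an ℝ-algebra automorphism `φ` of `A = ℝ[X,Y]/(X³Y, X²Y², Y⁴, X³−Y³)` satisfies
`φ(X) ≡ AX + CX² + DXY + EY²` and `φ(Y) ≡ AY + LX² + MXY + NY²` modulo `𝔫³`, with
`A ≠ 0`, then (since `φ(X³ − Y³) = 0` in `A`) necessarily `M = C`. -/
theorem stmt15 (φ : WB ≃ₐ[ℝ] WB) (A C D E L M N : ℝ) (hA : A ≠ 0)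
    (hX : φ bx - (A • bx + C • bx ^ 2 + D • (bx * bY) + E • bY ^ 2) ∈ mIdeal ^ 3)
    (hY : φ bY - (A • bY + L • bx ^ 2 + M • (bx * bY) + N • bY ^ 2) ∈ mIdeal ^ 3) :
    M = C := by
  simp only [add_assoc] at hX hY
  have hcube : φ bx ^ 3 = φ bY ^ 3 := by rw [← map_pow, ← map_pow, bx_pow_three]
  rw [Ideal.pow_three_eq_of_sub_mem mIdeal_pow_five
      (Submodule.smul_of_tower_mem _ A bx_mem_mIdeal) (quadratic_mem_mIdeal_sq C D E) hX,
    Ideal.pow_three_eq_of_sub_mem mIdeal_pow_five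
      (Submodule.smul_of_tower_mem _ A bY_mem_mIdeal) (quadratic_mem_mIdeal_sq L M N) hY,
    cube_expansion_bx, cube_expansion_bY, add_right_inj] at hcube
  have hcoeff := smul_left_injective ℝ bx_mul_bY_pow_three_ne_zero hcube
  exact (mul_left_cancel₀ (by positivity : (3 : ℝ) * A ^ 2 ≠ 0) hcoeff).symm
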